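/- Let A be a cancellative noetherian pointed abelian monoid with group completion A₀, and let a, b be nonzero elements of A. If for every prime ideal p associated to the principal ideal bA one has a ∈ bA_p (inside A₀), then a ∈ bA. -/
import Mathlib


/- A cancellative pointed abelian monoid is modeled as a multiplicative subset `A`
(containing `0` and `1`) of a commutative group with zero `G`; the hypothesis
`IsGroupCompletion A` says that `G` is the group completion `A₀` of `A`. -/

def IsSubmonoidWithZero {G : Type*} [CommGroupWithZero G] (A : Set G) : Prop :=
  (0 : G) ∈ A ∧ (1 : G) ∈ A ∧ ∀ x ∈ A, ∀ y ∈ A, x * y ∈ A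

/-- `G` is the group completion of `A`: every element is a ratio of elements of `A`. -/
def IsGroupCompletion {G : Type*} [CommGroupWithZero G] (A : Set G) : Prop :=
  ∀ g : G, ∃ a ∈ A, ∃ b ∈ A, b ≠ 0 ∧ g = a / b

/-- `A` is normal: every element of the group completion integral over `A` lies in `A`. -/
def IsNormalMonoid {G : Type*} [CommGroupWithZero G] (A : Set G) : Prop :=
  ∀ g : G, (∃ n : ℕ, 1 ≤ n ∧ g ^ n ∈ A) → g ∈ A

/-- An ideal of `A` (as a subset of `G`). -/
def IsIdealIn {G : Type*} [CommGroupWithZero G] (A I : Set G) : Prop :=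
  I ⊆ A ∧ (0 : G) ∈ I ∧ ∀ a ∈ A, ∀ x ∈ I, a * x ∈ I

def IsPrimeIn {G : Type*} [CommGroupWithZero G] (A p : Set G) : Prop :=
  IsIdealIn A p ∧ p ≠ A ∧ ∀ x ∈ A, ∀ y ∈ A, x * y ∈ p → x ∈ p ∨ y ∈ p

/-- Noetherian: ACC on ideals of `A`. -/
def IsNoetherianIn {G : Type*} [CommGroupWithZero G] (A : Set G) : Prop :=
  ∀ f : ℕ → Set G, (∀ n, IsIdealIn A (f n)) → (∀ n, f n ⊆ f (n + 1)) →
    ∃ N, ∀ m, N ≤ m → f m = f N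

/-- The localization of `A` at the complement of a prime `p`, inside `G = A₀`. -/
def locAt {G : Type*} [CommGroupWithZero G] (A p : Set G) : Set G :=
  {g : G | ∃ x ∈ A, ∃ s ∈ A, s ∉ p ∧ g = x / s}

/-- `p` has height one: the only prime strictly contained in `p` is `{0}`. -/
def HeightOne {G : Type*} [CommGroupWithZero G] (A p : Set G) : Prop :=
  p ≠ {0} ∧ ∀ q : Set G, IsPrimeIn A q → q ⊆ p → q = {0} ∨ q = p

/-- ACC implies every nonempty family of ideals has a maximal element. -/
theorem exists_maximal_ideal_in {G : Type*} [CommGroupWithZero G] (A : Set G)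
    (hnoe : IsNoetherianIn A) (F : Set (Set G)) (hF : ∀ I ∈ F, IsIdealIn A I)
    (hne : F.Nonempty) : ∃ I ∈ F, ∀ J ∈ F, I ⊆ J → J = I := by
  by_contra hmax
  push_neg at hmax
  obtain ⟨I₀, hI₀⟩ := hne
  have step : ∀ I : {I : Set G // I ∈ F}, ∃ J : {I : Set G // I ∈ F},
      I.1 ⊆ J.1 ∧ J.1 ≠ I.1 := by
    rintro ⟨I, hI⟩
    obtain ⟨J, hJF, hJ1, hJ2⟩ := hmax I hI
    exact ⟨⟨J, hJF⟩, hJ1, hJ2⟩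
  choose g hg1 hg2 using step
  set f : ℕ → {I : Set G // I ∈ F} := fun n => g^[n] ⟨I₀, hI₀⟩ with hf
  have hfs : ∀ n, f (n + 1) = g (f n) := fun n => Function.iterate_succ_apply' g n _
  obtain ⟨N, hN⟩ := hnoe (fun n => (f n).1) (fun n => hF _ (f n).2)
    (fun n => by have hsub := hg1 (f n); rw [← hfs n] at hsub; exact hsub)
  have h1 := hN (N + 1) (Nat.le_succ N)
  have h2 := hg2 (f N)
  rw [hfs N] at h1
  exact h2 h1

/-- If `a ∈ bA_p` for every prime `p` associated to the principal ideal `bA`,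
then `a ∈ bA`. -/
theorem mem_principal_of_mem_localizations {G : Type*} [CommGroupWithZero G] (A : Set G)
    (hA : IsSubmonoidWithZero A) (hgc : IsGroupCompletion A) (hnoe : IsNoetherianIn A)
    (a b : G) (haA : a ∈ A) (hbA : b ∈ A) (ha : a ≠ 0) (hb : b ≠ 0)
    (h : ∀ p : Set G, IsPrimeIn A p →
      (∃ c ∈ A, p = {x : G | x ∈ A ∧ x * c ∈ {y : G | ∃ d ∈ A, y = b * d}}) →
      ∃ α ∈ locAt A p, a = b * α) :
    ∃ d ∈ A, a = b * d := by
  classical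
  by_contra hcon
  set bset : Set G := {y : G | ∃ d ∈ A, y = b * d} with hbset
  set col : G → Set G := fun c => {x : G | x ∈ A ∧ x * c ∈ bset} with hcol
  have hbideal : ∀ x ∈ A, ∀ y ∈ bset, x * y ∈ bset := by
    rintro x hx y ⟨d, hd, rfl⟩
    exact ⟨x * d, hA.2.2 x hx d hd, mul_left_comm x b d⟩
  have hcolideal : ∀ c : G, IsIdealIn A (col c) := by
    intro c
    refine ⟨fun x hx => hx.1, ⟨hA.1, ⟨0, hA.1, by simp⟩⟩, ?_⟩
    rintro x hx y ⟨hyA, hyc⟩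
    exact ⟨hA.2.2 x hx y hyA, by rw [mul_assoc]; exact hbideal x hx _ hyc⟩
  have habset : a ∉ bset := fun ⟨d, hd, had⟩ => hcon ⟨d, hd, had⟩
  -- the family of colon ideals containing (bA : a)
  set F : Set (Set G) := {I : Set G | ∃ c ∈ A, c ∉ bset ∧ I = col c ∧ col a ⊆ I} with hF
  have hane : (col a) ∈ F := ⟨a, haA, habset, rfl, subset_rfl⟩
  obtain ⟨p, ⟨c, hcA, hcnb, rfl, hcolsub⟩, hmax⟩ :=
    exists_maximal_ideal_in A hnoe F (fun I hI => by
      obtain ⟨c, _, _, rfl, _⟩ := hI; exact hcolideal c) ⟨col a, hane⟩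
  -- col c is prime
  have hprime : IsPrimeIn A (col c) := by
    refine ⟨hcolideal c, ?_, ?_⟩
    · intro hEq
      have : (1 : G) ∈ col c := hEq ▸ hA.2.1
      exact hcnb (by simpa using this.2)
    · intro x hx y hy hxy
      by_cases hxp : x ∈ col c
      · exact Or.inl hxp
      · right
        have hxc : x * c ∉ bset := fun hmem => hxp ⟨hx, hmem⟩
        have hsub : col c ⊆ col (x * c) := by
          rintro z ⟨hzA, d, hd, hzc⟩
          refine ⟨hzA, x * d, hA.2.2 x hx d hd, ?_⟩
          calc z * (x * c) = x * (z * c) := mul_left_comm z x c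
            _ = x * (b * d) := by rw [hzc]
            _ = b * (x * d) := mul_left_comm x b d
        have : col (x * c) = col c :=
          hmax _ ⟨x * c, hA.2.2 x hx c hcA, hxc, rfl, hcolsub.trans hsub⟩ hsub
        rw [← this]
        obtain ⟨_, d, hd, hxyc⟩ := hxy
        exact ⟨hy, d, hd, by rw [mul_left_comm, ← mul_assoc]; exact hxyc⟩
  -- apply the hypothesis
  obtain ⟨α, ⟨x, hxA, s, hsA, hsp, rfl⟩, haeq⟩ := h (col c) hprime
    ⟨c, hcA, rfl⟩
  have hs0 : s ≠ 0 := by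
    rintro rfl
    exact hsp (hcolideal c).2.1
  have hkey : s ∈ col a := by
    refine ⟨hsA, x, hxA, ?_⟩
    rw [haeq]
    field_simp
  exact hsp (hcolsub hkey)
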